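/- Let k ≥ 2 and let A be a generalized Cartan matrix of type N_{k,n}. Then every principal submatrix of A of type N_{k-1} has dimension at least n-1 (hence, being proper, exactly n-1). -/

import Mathlib

/-- An `n × n` integer matrix is a generalized Cartan matrix (GCM). -/
def IsGCM {n : ℕ} (A : Matrix (Fin n) (Fin n) ℤ) : Prop :=
  (∀ i, A i i = 2) ∧ (∀ i j, i ≠ j → A i j ≤ 0) ∧ (∀ i j, A i j = 0 → A j i = 0)

/-- The graph on the index set of `A`, with an edge between `i ≠ j` whenever
`A i j ≠ 0` (stated symmetrically so as to be well-defined for all matrices;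
for a GCM, `A i j ≠ 0 ↔ A j i ≠ 0`). -/
def gcmGraph {n : ℕ} (A : Matrix (Fin n) (Fin n) ℤ) : SimpleGraph (Fin n) where
  Adj i j := i ≠ j ∧ (A i j ≠ 0 ∨ A j i ≠ 0)
  symm := ⟨fun i j h => ⟨h.1.symm, h.2.symm⟩⟩
  loopless := ⟨fun i h => h.1 rfl⟩

/-- A matrix is indecomposable (its diagram is connected). -/
def IsIndecomposable {n : ℕ} (A : Matrix (Fin n) (Fin n) ℤ) : Prop :=
  (gcmGraph A).Connected

/-- An indecomposable GCM is of finite type: there is `u > 0` with `A ⬝ u > 0`. -/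
def IsFinType {n : ℕ} (A : Matrix (Fin n) (Fin n) ℤ) : Prop :=
  IsGCM A ∧ IsIndecomposable A ∧
    ∃ u : Fin n → ℚ, (∀ i, 0 < u i) ∧ (∀ i, 0 < ∑ j, (A i j : ℚ) * u j)

/-- An indecomposable GCM is of affine type: there is `u > 0` with `A ⬝ u = 0`. -/
def IsAffType {n : ℕ} (A : Matrix (Fin n) (Fin n) ℤ) : Prop :=
  IsGCM A ∧ IsIndecomposable A ∧
    ∃ u : Fin n → ℚ, (∀ i, 0 < u i) ∧ (∀ i, ∑ j, (A i j : ℚ) * u j = 0)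

/-- An indecomposable GCM is of indefinite type: there is `u > 0` with `A ⬝ u < 0`. -/
def IsIndefType {n : ℕ} (A : Matrix (Fin n) (Fin n) ℤ) : Prop :=
  IsGCM A ∧ IsIndecomposable A ∧
    ∃ u : Fin n → ℚ, (∀ i, 0 < u i) ∧ (∀ i, ∑ j, (A i j : ℚ) * u j < 0)

/-- `B` is a principal submatrix of `A`: the restriction of `A` to a subset of
its index set (encoded by a strictly monotone map `Fin m → Fin n`). -/
def IsPrincipalSubmatrix {m n : ℕ} (B : Matrix (Fin m) (Fin m) ℤ)
    (A : Matrix (Fin n) (Fin n) ℤ) : Prop :=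
  ∃ f : Fin m → Fin n, StrictMono f ∧ B = A.submatrix f f

/-- A proper principal submatrix: the corresponding subset is nonempty and proper. -/
def IsProperPrincipalSubmatrix {m n : ℕ} (B : Matrix (Fin m) (Fin m) ℤ)
    (A : Matrix (Fin n) (Fin n) ℤ) : Prop :=
  IsPrincipalSubmatrix B A ∧ 0 < m ∧ m < n

/-- A GCM is of hyperbolic type: indecomposable, neither finite nor affine,
and every proper connected principal submatrix is of finite or affine type. -/
def IsHypType {n : ℕ} (A : Matrix (Fin n) (Fin n) ℤ) : Prop :=
  IsGCM A ∧ IsIndecomposable A ∧ ¬ IsFinType A ∧ ¬ IsAffType A ∧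
    ∀ m, ∀ B : Matrix (Fin m) (Fin m) ℤ,
      IsProperPrincipalSubmatrix B A → IsIndecomposable B →
        (IsFinType B ∨ IsAffType B)

/-- `N₀` = finite type, `N₁` = affine type, `N₂` = hyperbolic type; for `k ≥ 3`,
a GCM is of type `N_k` if it has a proper principal submatrix of type `N_{k-1}`
and every proper connected principal submatrix is of type `N_m` for some `m < k`. -/
def IsNType : (k : ℕ) → {n : ℕ} → Matrix (Fin n) (Fin n) ℤ → Prop
  | 0, _, A => IsFinType A
  | 1, _, A => IsAffType A
  | 2, _, A => IsHypType A
  | (k+3), _, A => IsGCM A ∧ IsIndecomposable A ∧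
      (∃ m, ∃ B : Matrix (Fin m) (Fin m) ℤ,
        IsProperPrincipalSubmatrix B A ∧ IsNType (k+2) B) ∧
      (∀ m, ∀ B : Matrix (Fin m) (Fin m) ℤ,
        IsProperPrincipalSubmatrix B A → IsIndecomposable B →
          ∃ m', ∃ _ : m' < k + 3, IsNType m' B)
  termination_by k => k

/-!
If `B` had dimension at most `n - 2`, connectedness of `A` would let us add to `B` one neighbouring
index, giving a connected proper principal submatrix `C` of `A` with `B` proper in `C`. A connected
proper principal submatrix of an `N_a` matrix is of type `N_b` for some `b < max a 1`: for `a ≥ 2`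
this is the definition, and for `a ≤ 1` it comes from restricting the positive vector `u` with
`A u > 0` resp. `A u = 0`; in the affine case the restricted vector satisfies `B u ≥ 0` with a
strict inequality at an index adjacent to the complement, and such a vector on a connected GCM can
be perturbed, one index at a time, into one with `B u > 0`. Going down `A ⊃ C ⊃ B` thus puts `B`
in some `N_b` with `b < k - 1`, while the `N`-types are mutually exclusive.
-/

open Finset Matrix

theorem StrictMono.exists_strictMono_comp_eq {α β γ : Type*} [Preorder α] [LinearOrder β]
    [Preorder γ] {f : α → γ} {g : β → γ} (hf : StrictMono f) (hg : StrictMono g)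
    (h : Set.range f ⊆ Set.range g) : ∃ e : α → β, StrictMono e ∧ g ∘ e = f := by
  choose e he using fun a => h ⟨a, rfl⟩
  refine ⟨e, fun a b hab => ?_, funext he⟩
  rw [← hg.lt_iff_lt, he, he]
  exact hf hab

theorem SimpleGraph.Connected.exists_adj_mem_notMem {V : Type*} {G : SimpleGraph V}
    (hG : G.Connected) {S : Set V} {a b : V} (ha : a ∈ S) (hb : b ∉ S) :
    ∃ x ∈ S, ∃ y ∉ S, G.Adj x y := by
  obtain ⟨d, -, hd⟩ := (hG.preconnected a b).some.exists_boundary_dart S ha hb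
  exact ⟨d.fst, hd.1, d.snd, hd.2, d.adj⟩

section GCM

variable {ι κ : Type*} [Fintype ι] [Fintype κ] {n m : ℕ}

theorem mulVec_apply_eq_submatrix_add [DecidableEq κ] {R : Type*} [NonUnitalNonAssocSemiring R]
    (M : Matrix κ κ R) {f : ι → κ} (hf : Function.Injective f) (u : κ → R) (p : ι) :
    (M *ᵥ u) (f p) = (M.submatrix f f *ᵥ (u ∘ f)) p + ∑ j ∈ (univ.image f)ᶜ, M (f p) j * u j := by
  rw [mulVec, dotProduct, ← sum_add_sum_compl (univ.image f), sum_image hf.injOn]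
  rfl

theorem IsGCM.submatrix {A : Matrix (Fin n) (Fin n) ℤ} (hA : IsGCM A) {f : Fin m → Fin n}
    (hf : Function.Injective f) : IsGCM (A.submatrix f f) :=
  ⟨fun _ => hA.1 _, fun _ _ hij => hA.2.1 _ _ (hf.ne hij), fun _ _ h => hA.2.2 _ _ h⟩

theorem gcmGraph_submatrix {A : Matrix (Fin n) (Fin n) ℤ} {f : Fin m → Fin n}
    (hf : Function.Injective f) : gcmGraph (A.submatrix f f) = (gcmGraph A).comap f := by
  ext i j
  simp [gcmGraph, hf.ne_iff]

variable {A : Matrix (Fin n) (Fin n) ℤ}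

theorem IsGCM.lt_zero_of_adj (hA : IsGCM A) {i j : Fin n} (h : (gcmGraph A).Adj i j) :
    A i j < 0 := by
  obtain ⟨hij, hne⟩ := h
  have : A i j ≠ 0 := by
    rcases hne with h | h
    · exact h
    · exact fun h0 => h (hA.2.2 _ _ h0)
  exact lt_of_le_of_ne (hA.2.1 i j hij) this

theorem IsGCM.mulVec_apply_nonpos (hA : IsGCM A) {w : Fin n → ℚ} (hw : ∀ j, 0 ≤ w j) {i : Fin n}
    (hi : w i = 0) : (A.map (↑) *ᵥ w) i ≤ 0 := by
  rw [mulVec, dotProduct]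
  refine sum_nonpos fun j _ => ?_
  rcases eq_or_ne i j with rfl | hij
  · simp [hi]
  · exact mul_nonpos_of_nonpos_of_nonneg (by simpa using hA.2.1 i j hij) (hw j)

theorem IsGCM.mulVec_apply_le_submatrix (hA : IsGCM A) {f : Fin m → Fin n}
    (hf : Function.Injective f) {u : Fin n → ℚ} (hu : ∀ j, 0 ≤ u j) (p : Fin m) :
    (A.map (↑) *ᵥ u) (f p) ≤ ((A.submatrix f f).map (↑) *ᵥ (u ∘ f)) p := by
  have hout : ∑ j ∈ (univ.image f)ᶜ, A.map (↑) (f p) j * u j ≤ (0 : ℚ) := by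
    refine sum_nonpos fun j hj => mul_nonpos_of_nonpos_of_nonneg ?_ (hu j)
    have hpj : f p ≠ j := fun h => (mem_compl.mp hj) (h ▸ mem_image_of_mem f (mem_univ p))
    simpa using hA.2.1 _ _ hpj
  rw [mulVec_apply_eq_submatrix_add _ hf]
  exact add_le_of_nonpos_right hout

theorem IsGCM.mulVec_apply_lt_submatrix (hA : IsGCM A) {f : Fin m → Fin n}
    (hf : Function.Injective f) {u : Fin n → ℚ} (hu : ∀ j, 0 < u j) {p : Fin m} {j : Fin n}
    (hj : j ∉ Set.range f) (hpj : (gcmGraph A).Adj (f p) j) :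
    (A.map (↑) *ᵥ u) (f p) < ((A.submatrix f f).map (↑) *ᵥ (u ∘ f)) p := by
  have hout : ∑ i ∈ (univ.image f)ᶜ, A.map (↑) (f p) i * u i < (0 : ℚ) := by
    refine sum_neg' (fun i hi => mul_nonpos_of_nonpos_of_nonneg ?_ (hu i).le) ⟨j, ?_, ?_⟩
    · have hpi : f p ≠ i := fun h => (mem_compl.mp hi) (h ▸ mem_image_of_mem f (mem_univ p))
      simpa using hA.2.1 _ _ hpi
    · simpa using hj
    · exact mul_neg_of_neg_of_pos (by simpa using hA.lt_zero_of_adj hpj) (hu j)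
  rw [mulVec_apply_eq_submatrix_add _ hf]
  exact add_lt_of_neg_right _ hout

end GCM

section Types

variable {n m : ℕ} {A : Matrix (Fin n) (Fin n) ℤ}

-- Lowering `u` at `x` by a small `ε` keeps row `x` positive and changes every other row `i`
-- by `-A i x * ε ≥ 0`, which is strictly positive at the neighbour `y`.
theorem IsGCM.exists_pos_mulVec_pos_of_adj (hA : IsGCM A) {u : Fin n → ℚ} (hu : ∀ i, 0 < u i)
    (h0 : ∀ i, 0 ≤ (A.map (↑) *ᵥ u) i) {x y : Fin n} (hx : 0 < (A.map (↑) *ᵥ u) x)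
    (hxy : (gcmGraph A).Adj x y) :
    ∃ v : Fin n → ℚ, (∀ i, 0 < v i) ∧ (∀ i, 0 ≤ (A.map (↑) *ᵥ v) i) ∧
      (∀ i, 0 < (A.map (↑) *ᵥ u) i → 0 < (A.map (↑) *ᵥ v) i) ∧ 0 < (A.map (↑) *ᵥ v) y := by
  obtain ⟨ε, hε, hεu, hεx⟩ : ∃ ε : ℚ, 0 < ε ∧ ε < u x ∧ 2 * ε < (A.map (↑) *ᵥ u) x :=
    ⟨min (u x) ((A.map (↑) *ᵥ u) x / 2) / 2, half_pos (lt_min (hu x) (half_pos hx)),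
      by linarith [min_le_left (u x) ((A.map (↑) *ᵥ u) x / 2), hu x],
      by linarith [min_le_right (u x) ((A.map (↑) *ᵥ u) x / 2)]⟩
  have hv : ∀ i, (A.map (↑) *ᵥ (u - Pi.single x ε)) i = (A.map (↑) *ᵥ u) i - A i x * ε := by
    intro i
    simp [mulVec, dotProduct_single]
  have hvx : 0 < (A.map (↑) *ᵥ (u - Pi.single x ε)) x := by
    rw [hv, hA.1 x]
    push_cast
    linarith
  have hvi : ∀ i ≠ x, (A.map (↑) *ᵥ u) i ≤ (A.map (↑) *ᵥ (u - Pi.single x ε)) i := by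
    intro i hix
    have : (A i x : ℚ) ≤ 0 := by exact_mod_cast hA.2.1 i x hix
    rw [hv]
    nlinarith
  refine ⟨u - Pi.single x ε, fun i => ?_, fun i => ?_, fun i hi => ?_, ?_⟩
  · rcases eq_or_ne i x with rfl | hix
    · simpa using hεu
    · simpa [hix] using hu i
  · rcases eq_or_ne i x with rfl | hix
    · exact hvx.le
    · exact (h0 i).trans (hvi i hix)
  · rcases eq_or_ne i x with rfl | hix
    · exact hvx
    · exact hi.trans_le (hvi i hix)
  · have : (A y x : ℚ) < 0 := by exact_mod_cast hA.lt_zero_of_adj hxy.symm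
    rw [hv]
    nlinarith [h0 y]

theorem IsGCM.isFinType_of_mulVec_nonneg (hA : IsGCM A) (hconn : IsIndecomposable A)
    {u : Fin n → ℚ} (hu : ∀ i, 0 < u i) (h0 : ∀ i, 0 ≤ (A.map (↑) *ᵥ u) i)
    {x : Fin n} (hx : 0 < (A.map (↑) *ᵥ u) x) : IsFinType A := by
  classical
  induction hN : #{i | ¬ 0 < (A.map (↑) *ᵥ u) i} using Nat.strong_induction_on generalizing u x
    with | _ N ih
  by_cases hpos : ∀ i, 0 < (A.map (↑) *ᵥ u) i
  · exact ⟨hA, hconn, u, hu, hpos⟩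
  push Not at hpos
  obtain ⟨z, hz⟩ := hpos
  obtain ⟨x', hx', y, hy, hxy⟩ := hconn.exists_adj_mem_notMem
    (S := {i | 0 < (A.map (↑) *ᵥ u) i}) hx hz.not_gt
  obtain ⟨v, hv, hv0, hmono, hy'⟩ := hA.exists_pos_mulVec_pos_of_adj hu h0 hx' hxy
  refine ih _ ?_ hv hv0 hy' rfl
  rw [← hN]
  refine card_lt_card ⟨fun i => ?_, fun hsub => ?_⟩
  · simp only [mem_filter, mem_univ, true_and]
    exact mt (hmono i)
  · have hy_new : ¬ 0 < (A.map (↑) *ᵥ v) y := (mem_filter.mp (hsub (by simpa using hy))).2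
    exact hy_new hy'

theorem IsFinType.not_isAffType (hA : IsFinType A) : ¬ IsAffType A := by
  rintro ⟨-, -, v, hv, hAv⟩
  obtain ⟨hA, hconn, u, hu, hAu⟩ := hA
  have : Nonempty (Fin n) := hconn.nonempty
  obtain ⟨i₀, -, hi₀⟩ := exists_min_image univ (fun i => u i / v i) univ_nonempty
  -- `u - t • v` is nonnegative and vanishes at `i₀`, yet `A (u - t • v) = A u > 0` there.
  set t := u i₀ / v i₀
  have hw : ∀ j, 0 ≤ (u - t • v) j := fun j => by
    have := hi₀ j (mem_univ j)
    rw [div_le_div_iff₀ (hv i₀) (hv j)] at this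
    simp only [Pi.sub_apply, Pi.smul_apply, smul_eq_mul, sub_nonneg, t, div_mul_eq_mul_div,
      div_le_iff₀ (hv i₀)]
    linarith
  have hw₀ : (u - t • v) i₀ = 0 := by simp [t, (hv i₀).ne']
  have hpos : 0 < (A.map (↑) *ᵥ (u - t • v)) i₀ := by
    have hAv₀ : (A.map (↑) *ᵥ v) i₀ = 0 := hAv i₀
    rw [mulVec_sub, mulVec_smul, Pi.sub_apply, Pi.smul_apply, hAv₀, smul_zero, sub_zero]
    exact hAu i₀
  exact (hA.mulVec_apply_nonpos hw hw₀).not_gt hpos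

theorem IsFinType.submatrix (hA : IsFinType A) {f : Fin m → Fin n} (hf : Function.Injective f)
    (hB : IsIndecomposable (A.submatrix f f)) : IsFinType (A.submatrix f f) := by
  obtain ⟨hA, -, u, hu, hAu⟩ := hA
  exact ⟨hA.submatrix hf, hB, u ∘ f, fun p => hu (f p),
    fun p => (hAu (f p)).trans_le (hA.mulVec_apply_le_submatrix hf (fun j => (hu j).le) p)⟩

theorem IsAffType.isFinType_submatrix (hA : IsAffType A) {f : Fin m → Fin n}
    (hf : Function.Injective f) (hproper : ¬ Function.Surjective f)
    (hB : IsIndecomposable (A.submatrix f f)) : IsFinType (A.submatrix f f) := by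
  obtain ⟨hA, hconn, u, hu, hAu⟩ := hA
  obtain ⟨p₀⟩ := hB.nonempty
  obtain ⟨j₀, hj₀⟩ := not_forall.mp hproper
  obtain ⟨-, ⟨p, rfl⟩, j, hj, hpj⟩ :=
    hconn.exists_adj_mem_notMem (S := Set.range f) ⟨p₀, rfl⟩ hj₀
  have hle := hA.mulVec_apply_le_submatrix hf (fun j => (hu j).le)
  refine (hA.submatrix hf).isFinType_of_mulVec_nonneg hB (fun p => hu (f p))
    (fun q => (hAu (f q)).symm.trans_le (hle q)) (x := p) ?_
  exact (hAu (f p)).symm.trans_lt (hA.mulVec_apply_lt_submatrix hf hu hj hpj)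

end Types

namespace IsNType

variable {a n m : ℕ} {A : Matrix (Fin n) (Fin n) ℤ}

theorem isIndecomposable (hA : IsNType a A) : IsIndecomposable A := by
  match a with
  | 0 | 1 | 2 | _ + 3 => rw [IsNType] at hA; exact hA.2.1

theorem exists_isNType_of_isProperPrincipalSubmatrix (hA : IsNType a A)
    {B : Matrix (Fin m) (Fin m) ℤ} (hBA : IsProperPrincipalSubmatrix B A)
    (hB : IsIndecomposable B) : ∃ b < max a 1, IsNType b B := by
  obtain ⟨⟨f, hf, rfl⟩, -, hmn⟩ := id hBA
  match a with
  | 0 =>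
    rw [IsNType] at hA
    exact ⟨0, by omega, by rw [IsNType]; exact hA.submatrix hf.injective hB⟩
  | 1 =>
    rw [IsNType] at hA
    have hproper : ¬ Function.Surjective f := fun h =>
      (Fintype.card_le_of_surjective f h).not_gt (by simpa using hmn)
    exact ⟨0, by omega, by rw [IsNType]; exact hA.isFinType_submatrix hf.injective hproper hB⟩
  | 2 =>
    rw [IsNType] at hA
    rcases hA.2.2.2.2 m _ hBA hB with h | h
    · exact ⟨0, by omega, by rw [IsNType]; exact h⟩
    · exact ⟨1, by omega, by rw [IsNType]; exact h⟩
  | a + 3 =>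
    rw [IsNType] at hA
    obtain ⟨b, hb, h⟩ := hA.2.2.2 m _ hBA hB
    exact ⟨b, by omega, h⟩

theorem not_isNType_of_lt {b : ℕ} (hab : a < b) (hA : IsNType a A) : ¬ IsNType b A := by
  induction b using Nat.strong_induction_on generalizing a n with | _ b ih
  intro hA'
  match b with
  | 1 =>
    obtain rfl : a = 0 := by omega
    rw [IsNType] at hA
    rw [IsNType] at hA'
    exact hA.not_isAffType hA'
  | 2 =>
    rw [IsNType] at hA'
    interval_cases a <;> rw [IsNType] at hA
    exacts [hA'.2.2.1 hA, hA'.2.2.2.1 hA]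
  | b + 3 =>
    rw [IsNType] at hA'
    obtain ⟨-, -, ⟨m, B, hBA, hB⟩, -⟩ := hA'
    obtain ⟨c, hc, hB'⟩ := hA.exists_isNType_of_isProperPrincipalSubmatrix hBA hB.isIndecomposable
    exact ih (b + 2) (by omega) (by omega) hB' hB

end IsNType

theorem IsPrincipalSubmatrix.exists_isIndecomposable_extension {n m : ℕ}
    {A : Matrix (Fin n) (Fin n) ℤ} {B : Matrix (Fin m) (Fin m) ℤ} (hBA : IsPrincipalSubmatrix B A)
    (hA : IsIndecomposable A) (hB : IsIndecomposable B) (hmn : m < n) :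
    ∃ C : Matrix (Fin (m + 1)) (Fin (m + 1)) ℤ,
      IsPrincipalSubmatrix C A ∧ IsIndecomposable C ∧ IsPrincipalSubmatrix B C := by
  classical
  obtain ⟨f, hf, rfl⟩ := hBA
  obtain ⟨p₀⟩ := hB.nonempty
  obtain ⟨z, hz⟩ : ∃ z, z ∉ Set.range f := not_forall.mp fun h =>
    (Fintype.card_le_of_surjective f h).not_gt (by simpa using hmn)
  obtain ⟨-, ⟨p, rfl⟩, y, hy, hpy⟩ := hA.exists_adj_mem_notMem (S := Set.range f) ⟨p₀, rfl⟩ hz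
  set S := insert y (univ.image f)
  have hS : #S = m + 1 := by
    rw [card_insert_of_notMem (by simpa using hy), card_image_of_injective _ hf.injective,
      card_univ, Fintype.card_fin]
  set g := S.orderEmbOfFin hS
  have hg : Set.range g = insert y (Set.range f) := by
    rw [range_orderEmbOfFin]
    simp [S]
  obtain ⟨e, he, hge⟩ := hf.exists_strictMono_comp_eq g.strictMono
    (hg ▸ Set.subset_insert y _)
  obtain ⟨i₀, hi₀⟩ : y ∈ Set.range g := hg ▸ Set.mem_insert y _
  have hBC : A.submatrix f f = (A.submatrix g g).submatrix e e := by
    rw [submatrix_submatrix, hge]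
  refine ⟨A.submatrix g g, ⟨g, g.strictMono, rfl⟩, ?_, ⟨e, he, hBC⟩⟩
  have hreach : ∀ v, (gcmGraph (A.submatrix g g)).Reachable v (e p) := by
    let hhom : gcmGraph (A.submatrix f f) →g gcmGraph (A.submatrix g g) :=
      ⟨e, fun h => by rwa [hBC, gcmGraph_submatrix he.injective] at h⟩
    intro v
    have hv : g v ∈ insert y (Set.range f) := hg ▸ Set.mem_range_self v
    rcases hv with hv | ⟨q, hq⟩
    · obtain rfl : v = i₀ := g.injective (hv.trans hi₀.symm)
      refine SimpleGraph.Adj.reachable ?_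
      rw [gcmGraph_submatrix g.injective]
      simpa [← hge, hi₀] using hpy.symm
    · obtain rfl : v = e q := g.injective (by rw [← hq, ← Function.comp_apply (f := g), hge])
      exact (hB.preconnected q p).map hhom
  exact ⟨fun v w => (hreach v).trans (hreach w).symm⟩

theorem dim_ge_of_isNType_principal_submatrix_general {k n m : ℕ} (hk : 2 ≤ k)
    {A : Matrix (Fin n) (Fin n) ℤ} (hN : IsNType k A)
    {B : Matrix (Fin m) (Fin m) ℤ}
    (hsub : IsPrincipalSubmatrix B A) (hB : IsNType (k - 1) B) :
    n - 1 ≤ m ∧ (IsProperPrincipalSubmatrix B A → m = n - 1) := by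
  have hle : n - 1 ≤ m := by
    by_contra! hlt
    have hm : 0 < m := Fin.pos_iff_nonempty.mpr hB.isIndecomposable.nonempty
    obtain ⟨C, hCA, hC, hBC⟩ :=
      hsub.exists_isIndecomposable_extension hN.isIndecomposable hB.isIndecomposable (by omega)
    obtain ⟨c, hc, hCc⟩ :=
      hN.exists_isNType_of_isProperPrincipalSubmatrix ⟨hCA, by omega, by omega⟩ hC
    obtain ⟨b, hb, hBb⟩ := hCc.exists_isNType_of_isProperPrincipalSubmatrix
      ⟨hBC, hm, by omega⟩ hB.isIndecomposable
    exact hBb.not_isNType_of_lt (by omega) hB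
  exact ⟨hle, fun hBA => by have := hBA.2.2; omega⟩

/-- Corollary 3.1 of the paper: for a GCM of type `N_{k,n}` with
`k ≥ 2`, every principal submatrix of type `N_{k-1}` has dimension at least `n - 1`;
hence, if it is a proper principal submatrix, its dimension is exactly `n - 1`. -/
theorem dim_ge_of_isNType_principal_submatrix {k n m : ℕ} (hk : 2 ≤ k)
    {A : Matrix (Fin n) (Fin n) ℤ} (hA : IsGCM A) (hN : IsNType k A)
    {B : Matrix (Fin m) (Fin m) ℤ}
    (hsub : IsPrincipalSubmatrix B A) (hB : IsNType (k - 1) B) :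
    n - 1 ≤ m ∧ (IsProperPrincipalSubmatrix B A → m = n - 1) :=
  dim_ge_of_isNType_principal_submatrix_general hk hN hsub hB
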